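/- For every n ≥ 0, one has the expansion in ℂ[x]: xⁿ = Σ_{k=0}^{n} Σ_{1 ≤ i₁ < i₂ < ⋯ < iₖ ≤ n} (∏_{j=1}^{k} ψ(x^{iⱼ − i_{j−1} − 1})) · φ(x^{n − iₖ}) · Aₖ(x), with the conventions i₀ = 0, ψ(x⁰) = φ(x⁰) = 1, and for k = 0 the summand is φ(xⁿ)·A₀. -/

import Mathlib

/-- The one-variable c-free Appell polynomials: `A₀ = 1` and
`Aₙ₊₁ = x·Aₙ − Σ_{j=1}^{n} rⱼ·A_{n+1−j} − s_{n+1}·1`. -/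
noncomputable def cfAppell (r s : ℕ → ℂ) : ℕ → Polynomial ℂ
  | 0 => 1
  | n + 1 =>
      Polynomial.X * cfAppell r s n
        - ∑ j ∈ Finset.range n, Polynomial.C (r (j + 1)) * cfAppell r s (n - j)
        - Polynomial.C (s (n + 1))
  termination_by n => n
  decreasing_by all_goals omega

/-- Substitution `Σ_{k≥1} rₖ·gᵏ` of a power series `g` with zero constant term into the
series `R(z) = Σ_{k≥1} rₖ zᵏ`, computed coefficientwise (for such `g`, the coefficient
of `wⁿ` in `Σ_{k≥1} rₖ gᵏ` is the finite sum `Σ_{k=1}^{n} rₖ·(coeff of wⁿ in gᵏ)`). -/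
noncomputable def substSeries (r : ℕ → ℂ) (g : PowerSeries ℂ) : PowerSeries ℂ :=
  PowerSeries.mk fun n => ∑ k ∈ Finset.Icc 1 n, r k * PowerSeries.coeff n (g ^ k)

/-- `gapProd ψp prev [i₁, …, iₖ] = ∏_{j=1}^{k} ψp (iⱼ − i_{j−1} − 1)` with `i₀ = prev`. -/
def gapProd (ψp : ℕ → ℂ) : ℕ → List ℕ → ℂ
  | _, [] => 1
  | prev, i :: t => ψp (i - prev - 1) * gapProd ψp i t

/-!
Put `G(w) = w(1 + M(w))`. The recursion for the `Aₖ` says that `𝒜(z) = Σ Aₖ zᵏ` satisfies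
`(1 - xz + R(z)) 𝒜(z) = 1 + R(z) - S(z)`. Substituting `z = G(w)` and using `R(G) = M`,
`S(G) = (1 + M) η` gives `(1 + M)(1 - xw) 𝒜(G) = (1 + M)(1 - η)`, so `𝒜(G) (1 - η)⁻¹ = (1 - xw)⁻¹`,
and comparing coefficients of `wⁿ` yields `xⁿ = Σₖ [wⁿ](Gᵏ (1 - η)⁻¹) Aₖ`.

Finally write `Gᵏ (1 - η)⁻¹ = (1 + M) w ⋯ (1 + M) w (1 - η)⁻¹`. If `iⱼ` is the degree reached
with the `j`-th factor `w`, the factor `1 + M` in front of it contributes degree `iⱼ - iⱼ₋₁ - 1`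
and `(1 - η)⁻¹` contributes degree `n - iₖ`, which turns `[wⁿ](Gᵏ (1 - η)⁻¹)` into the sum over
`1 ≤ i₁ < ⋯ < iₖ ≤ n` of the theorem.
-/

open PowerSeries Finset

theorem Finset.sum_powersetCard_succ_insert {α β : Type*} [DecidableEq α] [AddCommMonoid β]
    {a : α} {s : Finset α} (ha : a ∉ s) (k : ℕ) (f : Finset α → β) :
    ∑ B ∈ powersetCard (k + 1) (insert a s), f B
      = ∑ B ∈ powersetCard (k + 1) s, f B + ∑ B ∈ powersetCard k s, f (insert a B) := by
  have hnot : ∀ B ∈ powersetCard k s, a ∉ B := fun B hB =>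
    notMem_mono (mem_powersetCard.mp hB).1 ha
  rw [powersetCard_succ_insert ha, sum_union, sum_image]
  · intro B hB B' hB' h
    rw [← erase_insert (hnot B hB), h, erase_insert (hnot B' hB')]
  · refine disjoint_left.mpr fun B hB hB' => ?_
    obtain ⟨B', -, rfl⟩ := mem_image.mp hB'
    exact ha ((mem_powersetCard.mp hB).1 (mem_insert_self _ _))

theorem Finset.sort_insert_of_forall_lt {α : Type*} [LinearOrder α] {B : Finset α} {a : α}
    (h : ∀ b ∈ B, b < a) : (insert a B).sort (· ≤ ·) = B.sort (· ≤ ·) ++ [a] :=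
  List.Pairwise.eq_of_mem_iff (r := (· < ·)) (sortedLT_sort _).pairwise
    (List.pairwise_append.mpr ⟨(sortedLT_sort _).pairwise, by simp, by simpa using h⟩)
    (by simp [or_comm])

theorem Finset.sup_id_insert_of_forall_lt {α : Type*} [LinearOrder α] [OrderBot α]
    {B : Finset α} {a : α} (h : ∀ b ∈ B, b < a) : (insert a B).sup id = a := by
  rw [sup_insert, id, sup_eq_left]
  exact Finset.sup_le fun b hb => (h b hb).le

theorem Finset.getLastD_sort_eq_sup_id (B : Finset ℕ) :
    (B.sort (· ≤ ·)).getLastD 0 = B.sup id := by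
  induction B using Finset.induction_on_max with
  | empty => simp
  | insert a B h _ =>
    rw [sort_insert_of_forall_lt h, List.getLastD_concat, sup_id_insert_of_forall_lt h]

theorem gapProd_append (ψ : ℕ → ℂ) (l : List ℕ) (p a : ℕ) :
    gapProd ψ p (l ++ [a]) = gapProd ψ p l * ψ (a - l.getLastD p - 1) := by
  induction l generalizing p with
  | nil => simp [gapProd]
  | cons i t ih => simp only [List.cons_append, gapProd, ih, List.getLastD_cons, mul_assoc]

theorem gapProd_sort_insert_of_forall_lt (ψ : ℕ → ℂ) {B : Finset ℕ} {a : ℕ}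
    (h : ∀ b ∈ B, b < a) :
    gapProd ψ 0 ((insert a B).sort (· ≤ ·))
      = gapProd ψ 0 (B.sort (· ≤ ·)) * ψ (a - B.sup id - 1) := by
  rw [sort_insert_of_forall_lt h, gapProd_append, getLastD_sort_eq_sup_id]

/-- Stated for every `m`, not only `m = n`: removing `n + 1` from the subsets that contain it
leads to the instance `(n, k - 1, n)` with `Q` replaced by `P`. -/
theorem sum_powersetCard_gapProd_mul_coeff (P Q : ℂ⟦X⟧) (n k m : ℕ) :
    ∑ B ∈ powersetCard k (Icc 1 n),
        gapProd (coeff · P) 0 (B.sort (· ≤ ·)) * coeff (m - B.sup id) Q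
      = ∑ j ∈ range (n + 1), coeff j ((X * P) ^ k) * coeff (m - j) Q := by
  induction n generalizing k m Q with
  | zero =>
    cases k with
    | zero => simp [gapProd]
    | succ k => simp [powersetCard_eq_empty.mpr (show #(∅ : Finset ℕ) < k + 1 by simp)]
  | succ n ih =>
    cases k with
    | zero => simp [gapProd, coeff_one]
    | succ k =>
      have hlt : ∀ B ∈ powersetCard k (Icc 1 n), ∀ b ∈ B, b < n + 1 := fun B hB b hb =>
        Nat.lt_succ_of_le (mem_Icc.mp ((mem_powersetCard.mp hB).1 hb)).2
      rw [← insert_Icc_right_eq_Icc_add_one (by omega),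
        sum_powersetCard_succ_insert (by simp), ih, sum_range_succ _ (n + 1)]
      congr 1
      calc _ = (∑ B ∈ powersetCard k (Icc 1 n),
              gapProd (coeff · P) 0 (B.sort (· ≤ ·)) * coeff (n - B.sup id) P)
            * coeff (m - (n + 1)) Q := by
            rw [sum_mul]
            refine sum_congr rfl fun B hB => ?_
            rw [gapProd_sort_insert_of_forall_lt _ (hlt B hB),
              sup_id_insert_of_forall_lt (hlt B hB), Nat.sub_right_comm, Nat.add_sub_cancel]
        _ = _ := by
          rw [ih, ← Nat.sum_antidiagonal_eq_sum_range_succ (fun i j => coeff i _ * coeff j P),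
            ← coeff_mul, show (X * P) ^ (k + 1) = X * ((X * P) ^ k * P) by ring,
            coeff_succ_X_mul]

theorem coeff_X_mul_pow_mul_eq_sum_powersetCard (P Q : ℂ⟦X⟧) (n k : ℕ) :
    coeff n ((X * P) ^ k * Q) = ∑ B ∈ powersetCard k (Icc 1 n),
      gapProd (coeff · P) 0 (B.sort (· ≤ ·)) * coeff (n - B.sup id) Q := by
  rw [sum_powersetCard_gapProd_mul_coeff, coeff_mul,
    Nat.sum_antidiagonal_eq_sum_range_succ (fun i j => coeff i _ * coeff j Q)]

theorem PowerSeries.constantCoeff_map {R S : Type*} [Semiring R] [Semiring S] (f : R →+* S)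
    (φ : R⟦X⟧) : constantCoeff (φ.map f) = f (constantCoeff φ) :=
  MvPowerSeries.constantCoeff_map f φ

theorem PowerSeries.coeff_pow_eq_zero_of_lt {S : Type*} [CommSemiring S] {g : S⟦X⟧}
    (hg : constantCoeff g = 0) {n k : ℕ} (h : n < k) : coeff n (g ^ k) = 0 :=
  X_pow_dvd_iff.mp (pow_dvd_pow_of_dvd (X_dvd_iff.mpr hg) k) n h

theorem PowerSeries.mk_pow_mul_one_sub_C_mul_X {S : Type*} [CommRing S] (a : S) :
    PowerSeries.mk (a ^ ·) * (1 - C a * X) = 1 := by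
  simpa [rescale_mk, rescale_X] using congrArg (rescale a) (mk_one_mul_one_sub_eq_one (S := S))

section Substitution

variable {R S : Type*} [CommRing R] [CommRing S] [Algebra R S]

theorem PowerSeries.coeff_subst_eq_sum_range {b : S⟦X⟧} (hb : constantCoeff b = 0)
    (f : R⟦X⟧) {n N : ℕ} (h : n < N) :
    coeff n (f.subst b) = ∑ d ∈ range N, coeff d f • coeff n (b ^ d) := by
  rw [coeff_subst' (HasSubst.of_constantCoeff_zero' hb)]
  refine finsum_eq_sum_of_support_subset _ fun d hd => by_contra fun hdN => hd ?_
  rw [coe_range, Set.mem_Iio, not_lt] at hdN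
  simp only [coeff_pow_eq_zero_of_lt hb (h.trans_le hdN), smul_zero]

theorem PowerSeries.coeff_subst_mul {b : S⟦X⟧} (hb : constantCoeff b = 0) (f : R⟦X⟧)
    (c : S⟦X⟧) (n : ℕ) :
    coeff n (f.subst b * c) = ∑ d ∈ range (n + 1), coeff d f • coeff n (b ^ d * c) := by
  calc coeff n (f.subst b * c)
      = ∑ p ∈ antidiagonal n, ∑ d ∈ range (n + 1),
          coeff d f • (coeff p.1 (b ^ d) * coeff p.2 c) := by
        rw [coeff_mul]
        refine sum_congr rfl fun p hp => ?_
        rw [coeff_subst_eq_sum_range hb f (Nat.antidiagonal.fst_lt hp), sum_mul]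
        simp_rw [smul_mul_assoc]
    _ = _ := by simp_rw [sum_comm (s := antidiagonal n), coeff_mul, smul_sum]

end Substitution

noncomputable def seriesFromOne {R : Type*} [Semiring R] (c : ℕ → R) : R⟦X⟧ :=
  X * PowerSeries.mk fun k => c (k + 1)

theorem map_seriesFromOne {R S : Type*} [Semiring R] [Semiring S] (f : R →+* S) (c : ℕ → R) :
    (seriesFromOne c).map f = seriesFromOne (f ∘ c) := by
  rw [seriesFromOne, seriesFromOne, map_mul, map_X]
  rfl

theorem coeff_succ_seriesFromOne_mul {R : Type*} [Semiring R] (c : ℕ → R) (F : R⟦X⟧) (n : ℕ) :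
    coeff (n + 1) (seriesFromOne c * F) = ∑ j ∈ range (n + 1), c (j + 1) * coeff (n - j) F := by
  rw [seriesFromOne, mul_assoc, coeff_succ_X_mul, coeff_mul,
    Nat.sum_antidiagonal_eq_sum_range_succ (fun i j => coeff i (PowerSeries.mk _) * coeff j F)]
  simp only [coeff_mk]

theorem substSeries_eq_subst {g : ℂ⟦X⟧} (hg : constantCoeff g = 0) (c : ℕ → ℂ) :
    substSeries c g = (seriesFromOne c).subst g := by
  ext n
  rw [substSeries, coeff_mk, coeff_subst_eq_sum_range hg _ n.lt_add_one, sum_range_succ',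
    seriesFromOne, coeff_zero_X_mul, zero_smul, add_zero, ← Ico_add_one_right_eq_Icc,
    sum_Ico_eq_sum_range]
  simp [coeff_succ_X_mul, add_comm]

theorem constantCoeff_substSeries (c : ℕ → ℂ) (g : ℂ⟦X⟧) :
    constantCoeff (substSeries c g) = 0 := by
  rw [substSeries, ← coeff_zero_eq_constantCoeff_apply, coeff_mk, Icc_eq_empty_of_lt one_pos,
    sum_empty]

theorem cfAppell_genFun (r s : ℕ → ℂ) :
    (1 - C Polynomial.X * X + seriesFromOne (Polynomial.C ∘ r)) * PowerSeries.mk (cfAppell r s)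
      = 1 + seriesFromOne (Polynomial.C ∘ r) - seriesFromOne (Polynomial.C ∘ s) := by
  refine PowerSeries.ext fun n => ?_
  rcases n with _ | n
  · simp [seriesFromOne, cfAppell]
  · rw [add_mul, sub_mul, one_mul, mul_assoc, map_add, map_sub, coeff_C_mul, coeff_succ_X_mul,
      coeff_succ_seriesFromOne_mul, sum_range_succ, coeff_mk, coeff_mk, Nat.sub_self, cfAppell]
    simp only [seriesFromOne, map_add, map_sub, coeff_succ_X_mul, coeff_mk, coeff_one,
      Function.comp_apply, cfAppell, mul_one, Nat.add_eq_zero_iff, one_ne_zero, and_false,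
      if_false, zero_add]
    ring

theorem one_sub_C_mul_X_mul_subst_mk_cfAppell (r s : ℕ → ℂ) {M η : ℂ⟦X⟧}
    (hM : M = substSeries r (X * (1 + M)))
    (hη : η = (1 + M)⁻¹ * substSeries s (X * (1 + M))) :
    (1 - C Polynomial.X * X) * (PowerSeries.mk (cfAppell r s)).subst ((X * (1 + M)).map Polynomial.C)
      = (1 - η).map Polynomial.C := by
  set G := X * (1 + M)
  have hG : constantCoeff G = 0 := by simp [G]
  have hsubst : HasSubst (G.map Polynomial.C) :=
    HasSubst.of_constantCoeff_zero' (by rw [constantCoeff_map, hG, map_zero])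
  have hM0 : constantCoeff M = 0 :=
    (congrArg constantCoeff hM).trans (constantCoeff_substSeries _ _)
  have hR_subst : ∀ c, (seriesFromOne (Polynomial.C ∘ c)).subst (G.map Polynomial.C)
      = (substSeries c G).map Polynomial.C := fun c => by
    rw [← map_seriesFromOne, substSeries_eq_subst hG]
    exact (map_subst (HasSubst.of_constantCoeff_zero' hG) _).symm
  have hS : substSeries s G = (1 + M) * η := by
    rw [hη, ← mul_assoc, PowerSeries.mul_inv_cancel _ (by simp [hM0]), one_mul]
  have hgen := congrArg (substAlgHom (R := Polynomial ℂ) hsubst) (cfAppell_genFun r s)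
  simp only [map_mul, map_add, map_sub, map_one, coe_substAlgHom, hR_subst, ← hM, hS] at hgen
  rw [subst_X hsubst, subst_C, show MvPowerSeries.C Polynomial.X = C Polynomial.X from rfl] at hgen
  have hG_map : G.map Polynomial.C = X * (1 + M.map Polynomial.C) := by simp [G]
  have h1M : 1 + M.map Polynomial.C ≠ 0 := fun h => by
    simpa [constantCoeff_map, hM0] using congrArg constantCoeff h
  refine mul_left_cancel₀ h1M ?_
  rw [hG_map] at hgen ⊢
  rw [map_sub, map_one]
  linear_combination hgen

theorem X_pow_eq_sum_coeff_smul_cfAppell (r s : ℕ → ℂ) {M η : ℂ⟦X⟧}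
    (hM : M = substSeries r (X * (1 + M)))
    (hη : η = (1 + M)⁻¹ * substSeries s (X * (1 + M))) (n : ℕ) :
    (Polynomial.X : Polynomial ℂ) ^ n
      = ∑ k ∈ range (n + 1), coeff n ((X * (1 + M)) ^ k * (1 - η)⁻¹) • cfAppell r s k := by
  have hG : constantCoeff ((X * (1 + M)).map Polynomial.C) = 0 := by simp [constantCoeff_map]
  have hη0 : constantCoeff η = 0 := by rw [hη, map_mul, constantCoeff_substSeries, mul_zero]
  have hgeom : (PowerSeries.mk (cfAppell r s)).subst ((X * (1 + M)).map Polynomial.C)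
      * ((1 - η)⁻¹).map Polynomial.C = PowerSeries.mk (Polynomial.X ^ ·) := by
    refine mul_left_cancel₀ (a := 1 - C Polynomial.X * X)
      (fun h => by simpa using congrArg constantCoeff h) ?_
    rw [← mul_assoc, one_sub_C_mul_X_mul_subst_mk_cfAppell r s hM hη, ← map_mul,
      PowerSeries.mul_inv_cancel _ (by simp [hη0]), map_one, mul_comm,
      mk_pow_mul_one_sub_C_mul_X]
  rw [← coeff_mk n (Polynomial.X ^ ·), ← hgeom, coeff_subst_mul hG]
  refine sum_congr rfl fun k _ => ?_
  rw [← map_pow, ← map_mul, coeff_map, coeff_mk, smul_eq_mul, Polynomial.smul_eq_C_mul, mul_comm]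

theorem monomial_expansion_in_cfree_appell_general (r s : ℕ → ℂ) (M η : PowerSeries ℂ)
    (hM : M = substSeries r (PowerSeries.X * (1 + M)))
    (hη : η = (1 + M)⁻¹ * substSeries s (PowerSeries.X * (1 + M)))
    (φp ψp : ℕ → ℂ)
    (hφ : ∀ m, φp m = PowerSeries.coeff m (1 - η)⁻¹)
    (hψ : ∀ m, ψp m = PowerSeries.coeff m (1 + M))
    (n : ℕ) :
    (Polynomial.X : Polynomial ℂ) ^ n =
      ∑ B ∈ (Finset.Icc 1 n).powerset,
        (gapProd ψp 0 (B.sort (· ≤ ·)) * φp (n - B.sup id)) • cfAppell r s B.card := by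
  obtain rfl : φp = fun m => coeff m (1 - η)⁻¹ := funext hφ
  obtain rfl : ψp = fun m => coeff m (1 + M) := funext hψ
  rw [X_pow_eq_sum_coeff_smul_cfAppell r s hM hη n, sum_powerset, Nat.card_Icc, Nat.add_sub_cancel]
  refine sum_congr rfl fun k _ => ?_
  rw [coeff_X_mul_pow_mul_eq_sum_powersetCard, sum_smul]
  exact sum_congr rfl fun B hB => by rw [(mem_powersetCard.mp hB).2]

/-- with `M` the unique zero-constant-term solution of `M = R(w(1+M))`,
`η = (1+M)⁻¹·S(w(1+M))`, `φ(xⁿ) = [wⁿ](1−η)⁻¹` and `ψ(xⁿ) = [wⁿ](1+M)`, one has for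
every `n` the expansion
`xⁿ = Σ_{k=0}^{n} Σ_{1 ≤ i₁ < ⋯ < iₖ ≤ n} (∏ⱼ ψ(x^{iⱼ−i_{j−1}−1})) φ(x^{n−iₖ}) Aₖ(x)`
in `ℂ[x]`, the double sum being written as a sum over subsets `B ⊆ {1, …, n}` (listed
in increasing order) with `k = |B|` and `iₖ = max B` (`i₀ = 0`, and the `B = ∅` summand
is `φ(xⁿ)·A₀`). -/
theorem monomial_expansion_in_cfree_appell (r s : ℕ → ℂ) (M η : PowerSeries ℂ)
    (hM0 : PowerSeries.constantCoeff M = 0)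
    (hM : M = substSeries r (PowerSeries.X * (1 + M)))
    (hη : η = (1 + M)⁻¹ * substSeries s (PowerSeries.X * (1 + M)))
    (φp ψp : ℕ → ℂ)
    (hφ : ∀ m, φp m = PowerSeries.coeff m (1 - η)⁻¹)
    (hψ : ∀ m, ψp m = PowerSeries.coeff m (1 + M))
    (n : ℕ) :
    (Polynomial.X : Polynomial ℂ) ^ n =
      ∑ B ∈ (Finset.Icc 1 n).powerset,
        (gapProd ψp 0 (B.sort (· ≤ ·)) * φp (n - B.sup id)) • cfAppell r s B.card :=
  monomial_expansion_in_cfree_appell_general r s M η hM hη φp ψp hφ hψ n
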